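/- Under the hypotheses of Proposition 1 (θ ∈ ℝ^{1+q} with blocks B_M, θ^M ≠ 0 for all M, subgradient vectors u, u^𝓜, v with ‖u‖₂ ≤ 1, g = λu + λα₁u^𝓜 + λα₂v, and weights w with w₀ = 0 and w_i = λα₁|θ_i|/‖θ^{M(i)}‖₂ + λα₂), the soft-thresholded gradient satisfies ‖S(g, w)‖₂ ≤ λ. -/

import Mathlib

/-!
Coordinatewise, the triangle inequality gives `|g_i| ≤ λ|u_i| + w_i`: the weight `w_i` dominates
the contributions `λα₁|u^𝓜_i| + λα₂|v_i|` of the two penalty subgradients. Soft-thresholding at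
`w_i` therefore leaves at most `λ|u_i|` in each coordinate, and `‖S(g, w)‖₂ ≤ λ‖u‖₂ ≤ λ`.
-/

open scoped BigOperators

/-- Euclidean (ℓ2) norm of a finitely-indexed real vector. -/
noncomputable def l2norm {α : Type*} [Fintype α] (f : α → ℝ) : ℝ :=
  Real.sqrt (∑ a, f a ^ 2)

theorem Real.abs_sign_le_one (x : ℝ) : |Real.sign x| ≤ 1 := by
  rcases Real.sign_apply_eq x with h | h | h <;> simp [h]

theorem abs_le_one_of_sign_subgradient {t s : ℝ}
    (h : (t ≠ 0 → s = Real.sign t) ∧ (t = 0 → s ∈ Set.Icc (-1 : ℝ) 1)) : |s| ≤ 1 := by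
  by_cases ht : t = 0
  · exact abs_le.2 (h.2 ht)
  · exact h.1 ht ▸ Real.abs_sign_le_one t

theorem abs_sign_mul_max_sub_le {x t c : ℝ} (hc : 0 ≤ c) (h : |x| ≤ c + t) :
    |Real.sign x * max (|x| - t) 0| ≤ c := by
  rw [abs_mul, abs_of_nonneg (le_max_right (|x| - t) 0)]
  calc |Real.sign x| * max (|x| - t) 0 ≤ 1 * max (|x| - t) 0 :=
        mul_le_mul_of_nonneg_right (Real.abs_sign_le_one x) (le_max_right _ _)
    _ ≤ c := by rw [one_mul]; exact max_le (by linarith) hc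

theorem l2norm_nonneg {α : Type*} [Fintype α] (f : α → ℝ) : 0 ≤ l2norm f :=
  Real.sqrt_nonneg _

theorem l2norm_le_mul_of_abs_le {α : Type*} [Fintype α] {f u : α → ℝ} {c : ℝ} (hc : 0 ≤ c)
    (h : ∀ a, |f a| ≤ c * |u a|) : l2norm f ≤ c * l2norm u := by
  have hsq : ∀ a, f a ^ 2 ≤ c ^ 2 * u a ^ 2 := fun a => by
    rw [← sq_abs (f a), ← sq_abs (u a), ← mul_pow]
    exact pow_le_pow_left₀ (abs_nonneg _) (h a) 2
  calc l2norm f ≤ Real.sqrt (∑ a, c ^ 2 * u a ^ 2) :=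
        Real.sqrt_le_sqrt (Finset.sum_le_sum fun a _ => hsq a)
    _ = c * l2norm u := by
        rw [← Finset.mul_sum, Real.sqrt_mul (sq_nonneg c), Real.sqrt_sq hc, l2norm]

theorem abs_mul_add_mul_add_mul_le {a b c x y z : ℝ} (ha : 0 ≤ a) (hb : 0 ≤ b) (hc : 0 ≤ c) :
    |a * x + b * y + c * z| ≤ a * |x| + b * |y| + c * |z| := by
  simpa only [abs_mul, abs_of_nonneg ha, abs_of_nonneg hb, abs_of_nonneg hc] using
    abs_add_three (a * x) (b * y) (c * z)

theorem strong_rule_bound_general {𝓜 : Type*} [Fintype 𝓜] (B : 𝓜 → Type*)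
    [∀ M, Fintype (B M)]
    (θ u u𝓜 v g w : Option ((M : 𝓜) × B M) → ℝ)
    (lam α₁ α₂ : ℝ) (hlam : 0 ≤ lam) (hα₁ : 0 ≤ α₁) (hα₂ : 0 ≤ α₂)
    (hu : l2norm u ≤ 1)
    (hu𝓜0 : u𝓜 none = 0)
    (hu𝓜 : ∀ (M : 𝓜) (b : B M),
      u𝓜 (some ⟨M, b⟩) = θ (some ⟨M, b⟩) / l2norm (fun b' : B M => θ (some ⟨M, b'⟩)))
    (hv0 : v none = 0)
    (hv : ∀ (M : 𝓜) (b : B M),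
      (θ (some ⟨M, b⟩) ≠ 0 → v (some ⟨M, b⟩) = Real.sign (θ (some ⟨M, b⟩))) ∧
      (θ (some ⟨M, b⟩) = 0 → v (some ⟨M, b⟩) ∈ Set.Icc (-1 : ℝ) 1))
    (hg : g = fun i => lam * u i + lam * α₁ * u𝓜 i + lam * α₂ * v i)
    (hw0 : w none = 0)
    (hw : ∀ (M : 𝓜) (b : B M),
      w (some ⟨M, b⟩) =
        lam * α₁ * |θ (some ⟨M, b⟩)| / l2norm (fun b' : B M => θ (some ⟨M, b'⟩)) + lam * α₂) :
    l2norm (fun i => Real.sign (g i) * max (|g i| - w i) 0) ≤ lam := by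
  have hpenalty : ∀ i, lam * α₁ * |u𝓜 i| + lam * α₂ * |v i| ≤ w i := by
    rintro (_ | ⟨M, b⟩)
    · simp [hu𝓜0, hv0, hw0]
    · have hv1 := mul_le_mul_of_nonneg_left (abs_le_one_of_sign_subgradient (hv M b))
        (mul_nonneg hlam hα₂)
      rw [hw, hu𝓜, abs_div, abs_of_nonneg (l2norm_nonneg _), ← mul_div_assoc]
      linarith
  have hg_le : ∀ i, |g i| ≤ lam * |u i| + w i := fun i => by
    have htri := abs_mul_add_mul_add_mul_le (x := u i) (y := u𝓜 i) (z := v i) hlam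
      (mul_nonneg hlam hα₁) (mul_nonneg hlam hα₂)
    rw [hg]
    linarith [hpenalty i]
  calc l2norm (fun i => Real.sign (g i) * max (|g i| - w i) 0) ≤ lam * l2norm u :=
        l2norm_le_mul_of_abs_le hlam fun i =>
          abs_sign_mul_max_sub_le (mul_nonneg hlam (abs_nonneg _)) (hg_le i)
    _ ≤ lam := mul_le_of_le_one_right hlam hu

/-- **Strong-rule bound (Proposition 1, consequence).**  The coordinates of `θ ∈ ℝ^{1+q}` consist of a distinguished
coordinate (`none`) and disjoint nonempty blocks `B M` indexed by `M ∈ 𝓜`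
(the coordinate `some ⟨M, b⟩` lies in block `M`).  Assume each block restriction
`θ^M` is nonzero; `u` is a subgradient of `‖·‖₂` at `θ` (so `‖u‖₂ ≤ 1`, with
`u = θ/‖θ‖₂` if `θ ≠ 0`); `u𝓜` vanishes at the distinguished coordinate and
equals `θ_i/‖θ^M‖₂` on block `M`; `v` vanishes at the distinguished coordinate,
equals `sign(θ_i)` when `θ_i ≠ 0` and lies in `[−1,1]` otherwise.  With
`g = λu + λα₁u𝓜 + λα₂v` and weights `w` given by `w₀ = 0` and
`w_i = λα₁|θ_i|/‖θ^{M(i)}‖₂ + λα₂`, the componentwise soft-threshold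
`S(g,w)_i = sign(g_i)·(|g_i| − w_i)₊` satisfies `‖S(g,w)‖₂ ≤ λ`. -/
theorem strong_rule_bound {𝓜 : Type*} [Fintype 𝓜] (B : 𝓜 → Type*)
    [∀ M, Fintype (B M)] [∀ M, Nonempty (B M)]
    (θ u u𝓜 v g w : Option ((M : 𝓜) × B M) → ℝ)
    (lam α₁ α₂ : ℝ) (hlam : 0 ≤ lam) (hα₁ : 0 ≤ α₁) (hα₂ : 0 ≤ α₂)
    (hθM : ∀ M : 𝓜, (fun b : B M => θ (some ⟨M, b⟩)) ≠ 0)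
    (hu : l2norm u ≤ 1)
    (hu' : θ ≠ 0 → u = fun i => θ i / l2norm θ)
    (hu𝓜0 : u𝓜 none = 0)
    (hu𝓜 : ∀ (M : 𝓜) (b : B M),
      u𝓜 (some ⟨M, b⟩) = θ (some ⟨M, b⟩) / l2norm (fun b' : B M => θ (some ⟨M, b'⟩)))
    (hv0 : v none = 0)
    (hv : ∀ (M : 𝓜) (b : B M),
      (θ (some ⟨M, b⟩) ≠ 0 → v (some ⟨M, b⟩) = Real.sign (θ (some ⟨M, b⟩))) ∧
      (θ (some ⟨M, b⟩) = 0 → v (some ⟨M, b⟩) ∈ Set.Icc (-1 : ℝ) 1))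
    (hg : g = fun i => lam * u i + lam * α₁ * u𝓜 i + lam * α₂ * v i)
    (hw0 : w none = 0)
    (hw : ∀ (M : 𝓜) (b : B M),
      w (some ⟨M, b⟩) =
        lam * α₁ * |θ (some ⟨M, b⟩)| / l2norm (fun b' : B M => θ (some ⟨M, b'⟩)) + lam * α₂) :
    l2norm (fun i => Real.sign (g i) * max (|g i| - w i) 0) ≤ lam :=
  strong_rule_bound_general B θ u u𝓜 v g w lam α₁ α₂ hlam hα₁ hα₂ hu hu𝓜0 hu𝓜 hv0 hv hg hw0 hw
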